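/- Under the assumptions that for each tested index i the family (p_j) of vectors paired with i is linearly independent and all k_{ij}, ⟨p_i,p_j⟩ ∈ (0,1), a point is a critical point of the BCE loss ℓ((p_i)) = ∑_{(i,j)∈P} BCE(k_{ij} | ⟨p_i,p_j⟩) if and only if it is a critical point of the squared-error loss ℓ_s((p_i)) = ∑_{(i,j)∈P} (k_{ij} - ⟨p_i,p_j⟩)²; both hold exactly when ⟨p_i,p_j⟩ = k_{ij} for all tested pairs. -/

import Mathlib

/-!
For each `i`, the gradient of either loss with respect to `p i` is a combination of the vectors
`p j`, `(i, j) ∈ P`, which are linearly independent; so it vanishes iff every coefficient does.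
The squared-error coefficient `k - x` and the cross-entropy coefficient
`k / x - (1 - k) / (1 - x) = (k - x) / (x (1 - x))` both vanish exactly when `x = k`.
-/

open Finset

theorem Finset.sum_filter_smul_eq_zero_iff_of_linearIndependent {R M ι : Type*} [Fintype ι]
    [Ring R] [AddCommGroup M] [Module R M] (q : ι → Prop) [DecidablePred q] (v : ι → M)
    (hv : LinearIndependent R (fun j : {j // q j} => v j)) (c : ι → R) :
    ∑ j ∈ univ.filter q, c j • v j = 0 ↔ ∀ j, q j → c j = 0 := by
  rw [sum_subtype (p := q) _ (by simp)]
  constructor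
  · intro h j hj
    exact Fintype.linearIndependent_iff.mp hv (fun j => c j) h ⟨j, hj⟩
  · intro h
    exact sum_eq_zero fun j _ => by rw [h j j.2, zero_smul]

theorem div_sub_div_one_sub_eq_zero_iff {F : Type*} [Field F] {x t : F} (hx₀ : x ≠ 0)
    (hx₁ : x ≠ 1) : t / x - (1 - t) / (1 - x) = 0 ↔ x = t := by
  rw [sub_eq_zero, div_eq_div_iff hx₀ (sub_ne_zero.mpr hx₁.symm)]
  constructor <;> intro h <;> linear_combination -h

theorem prop1_bce_se_equivalence_general {K : ℕ} {ι : Type*} [Fintype ι] [DecidableEq ι]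
    (P : Finset (ι × ι)) (p : ι → (Fin K → ℝ)) (k : ι → ι → ℝ)
    (hdot : ∀ e ∈ P, (∑ c, p e.1 c * p e.2 c) ∈ Set.Ioo (0:ℝ) 1)
    (hli : ∀ i, LinearIndependent ℝ (fun j : {j // (i, j) ∈ P} => p j.1)) :
    ((∀ i, -(∑ j ∈ Finset.univ.filter (fun j => (i, j) ∈ P),
        (k i j / (∑ c, p i c * p j c) -
          (1 - k i j) / (1 - ∑ c, p i c * p j c)) • p j) = 0) ↔
      (∀ i, -(2:ℝ) • (∑ j ∈ Finset.univ.filter (fun j => (i, j) ∈ P),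
        (k i j - ∑ c, p i c * p j c) • p j) = 0)) ∧
    ((∀ i, -(∑ j ∈ Finset.univ.filter (fun j => (i, j) ∈ P),
        (k i j / (∑ c, p i c * p j c) -
          (1 - k i j) / (1 - ∑ c, p i c * p j c)) • p j) = 0) ↔
      (∀ e ∈ P, (∑ c, p e.1 c * p e.2 c) = k e.1 e.2)) := by
  have hbce : (∀ i, -(∑ j ∈ univ.filter (fun j => (i, j) ∈ P),
        (k i j / (∑ c, p i c * p j c) -
          (1 - k i j) / (1 - ∑ c, p i c * p j c)) • p j) = 0) ↔
      ∀ e ∈ P, (∑ c, p e.1 c * p e.2 c) = k e.1 e.2 := by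
    simp only [neg_eq_zero, sum_filter_smul_eq_zero_iff_of_linearIndependent _ _ (hli _),
      Prod.forall]
    refine forall₂_congr fun i j => imp_congr_right fun hij => ?_
    obtain ⟨hx₀, hx₁⟩ := hdot (i, j) hij
    exact div_sub_div_one_sub_eq_zero_iff hx₀.ne' hx₁.ne
  have hse : (∀ i, -(2:ℝ) • (∑ j ∈ univ.filter (fun j => (i, j) ∈ P),
        (k i j - ∑ c, p i c * p j c) • p j) = 0) ↔
      ∀ e ∈ P, (∑ c, p e.1 c * p e.2 c) = k e.1 e.2 := by
    simp only [smul_eq_zero, neg_eq_zero, two_ne_zero, false_or,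
      sum_filter_smul_eq_zero_iff_of_linearIndependent _ _ (hli _), Prod.forall]
    exact forall₂_congr fun i j => imp_congr_right fun _ => sub_eq_zero.trans eq_comm
  exact ⟨hbce.trans hse.symm, hbce⟩

theorem prop1_bce_se_equivalence {K : ℕ} {ι : Type*} [Fintype ι] [DecidableEq ι]
    (P : Finset (ι × ι)) (p : ι → (Fin K → ℝ)) (k : ι → ι → ℝ)
    (hk : ∀ e ∈ P, k e.1 e.2 ∈ Set.Ioo (0:ℝ) 1)
    (hdot : ∀ e ∈ P, (∑ c, p e.1 c * p e.2 c) ∈ Set.Ioo (0:ℝ) 1)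
    (hli : ∀ i, LinearIndependent ℝ (fun j : {j // (i, j) ∈ P} => p j.1)) :
    ((∀ i, -(∑ j ∈ Finset.univ.filter (fun j => (i, j) ∈ P),
        (k i j / (∑ c, p i c * p j c) -
          (1 - k i j) / (1 - ∑ c, p i c * p j c)) • p j) = 0) ↔
      (∀ i, -(2:ℝ) • (∑ j ∈ Finset.univ.filter (fun j => (i, j) ∈ P),
        (k i j - ∑ c, p i c * p j c) • p j) = 0)) ∧
    ((∀ i, -(∑ j ∈ Finset.univ.filter (fun j => (i, j) ∈ P),
        (k i j / (∑ c, p i c * p j c) -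
          (1 - k i j) / (1 - ∑ c, p i c * p j c)) • p j) = 0) ↔
      (∀ e ∈ P, (∑ c, p e.1 c * p e.2 c) = k e.1 e.2)) :=
  prop1_bce_se_equivalence_general P p k hdot hli
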